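/- Let ψ : ℂ → ℂ be entire with finite Segal–Bargmann norm. Then the reproducing kernel K(z,w) = e^{z·conj(w)} satisfies the reproducing property: for every w ∈ ℂ, ψ(w) = (1/π)∫_ℂ e^{w·conj(z)} ψ(z) e^{-|z|²} dA(z). -/

import Mathlib

/-!
Translating by `w` turns the integrand into `G z * e^{-|z|²}` with `G z = e^{-z w̄} ψ (z + w)`
entire and `G 0 = ψ w`. In polar coordinates the mean value property on each circle gives
`∫ G z e^{-|z|²} = 2π G 0 ∫₀^∞ r e^{-r²} dr = π G 0`. The integrand is integrable because both
`ψ` and the kernel `e^{w z̄}` are square integrable against the Gaussian weight.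
-/

open MeasureTheory Real Set
open scoped Complex ComplexConjugate

theorem integrableOn_comp_polarCoord_symm {E : Type*} [NormedAddCommGroup E] [NormedSpace ℝ E]
    {f : ℝ × ℝ → E} (hf : Integrable f) :
    IntegrableOn (fun p : ℝ × ℝ => p.1 • f (polarCoord.symm p)) polarCoord.target := by
  have h := (integrableOn_image_iff_integrableOn_abs_det_fderiv_smul volume
    polarCoord.open_target.measurableSet
    (fun p _ => (hasFDerivAt_polarCoord_symm p).hasFDerivWithinAt)
    polarCoord.symm.injOn f).mp (polarCoord.symm_image_target_eq_source ▸ hf.integrableOn)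
  refine h.congr_fun (fun p hp => ?_) polarCoord.open_target.measurableSet
  simp only [det_fderivPolarCoordSymm, abs_of_pos (mem_Ioi.mp hp.1)]

theorem Complex.integrableOn_comp_polarCoord_symm {E : Type*} [NormedAddCommGroup E]
    [NormedSpace ℝ E] {f : ℂ → E} (hf : Integrable f) :
    IntegrableOn (fun p : ℝ × ℝ => p.1 • f (Complex.polarCoord.symm p)) polarCoord.target :=
  _root_.integrableOn_comp_polarCoord_symm <|
    (volume_preserving_equiv_real_prod.symm.integrable_comp_emb
      measurableEquivRealProd.symm.measurableEmbedding).mpr hf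

theorem Complex.polarCoord_symm_eq_circleMap (r θ : ℝ) :
    Complex.polarCoord.symm (r, θ) = circleMap 0 r θ := by
  simp [circleMap, Complex.exp_mul_I, ← Complex.ofReal_cos, ← Complex.ofReal_sin]

section MeanValue

variable {E : Type*} [NormedAddCommGroup E] [NormedSpace ℂ E] [CompleteSpace E]

theorem Differentiable.integral_Ioo_comp_polarCoord_symm {g : ℂ → E} (hg : Differentiable ℂ g)
    (r : ℝ) : ∫ θ in Ioo (-π) π, g (Complex.polarCoord.symm (r, θ)) = (2 * π) • g 0 := by
  have hmean := (hg.diffContOnCl (s := Metric.ball 0 |r|)).circleAverage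
  rw [circleAverage_eq_integral_add (-π), intervalIntegral.integral_comp_add_right
    (fun θ => g (circleMap 0 r θ))] at hmean
  rw [← integral_Ioc_eq_integral_Ioo, ← intervalIntegral.integral_of_le (by linarith [pi_pos])]
  simp only [Complex.polarCoord_symm_eq_circleMap]
  rw [← hmean, smul_inv_smul₀ (by positivity)]
  ring_nf

theorem Differentiable.integral_radial_smul {g : ℂ → E} (hg : Differentiable ℂ g) (ρ : ℝ → ℝ)
    (hint : Integrable (fun z : ℂ => ρ ‖z‖ • g z)) :
    ∫ z : ℂ, ρ ‖z‖ • g z = ((2 * π) * ∫ r in Ioi 0, r * ρ r) • g 0 := by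
  have hpolar := Complex.integrableOn_comp_polarCoord_symm hint
  rw [polarCoord_target, Measure.volume_eq_prod] at hpolar
  have hinner : ∀ r ∈ Ioi (0 : ℝ), ∫ θ in Ioo (-π) π,
      r • (ρ ‖Complex.polarCoord.symm (r, θ)‖ • g (Complex.polarCoord.symm (r, θ)))
        = (r * ρ r) • ((2 * π) • g 0) := by
    intro r hr
    simp only [Complex.norm_polarCoord_symm, abs_of_pos (mem_Ioi.mp hr), smul_smul]
    rw [integral_smul, hg.integral_Ioo_comp_polarCoord_symm, smul_smul]
  rw [← Complex.integral_comp_polarCoord_symm, polarCoord_target, Measure.volume_eq_prod,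
    setIntegral_prod _ hpolar, setIntegral_congr_fun measurableSet_Ioi hinner,
    integral_smul_const, smul_smul, mul_comm]

theorem integral_Ioi_mul_exp_neg_sq : ∫ r in Ioi (0 : ℝ), r * rexp (-r ^ 2) = 1 / 2 := by
  have h := integral_mul_cexp_neg_mul_sq (b := 1) (by simp)
  simp only [neg_mul, one_mul, mul_one] at h
  apply Complex.ofReal_injective
  rw [← integral_complex_ofReal]
  push_cast
  simpa using h

theorem Differentiable.integral_gaussian_smul {g : ℂ → E} (hg : Differentiable ℂ g)
    (hint : Integrable (fun z : ℂ => rexp (-‖z‖ ^ 2) • g z)) :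
    ∫ z : ℂ, rexp (-‖z‖ ^ 2) • g z = π • g 0 := by
  rw [hg.integral_radial_smul (fun r => rexp (-r ^ 2)) hint, integral_Ioi_mul_exp_neg_sq]
  ring_nf

end MeanValue

theorem integrable_mul_mul_of_sq_norm_mul {α : Type*} [MeasurableSpace α] {μ : Measure α}
    {f g : α → ℂ} {ρ : α → ℝ} (hf : AEStronglyMeasurable f μ) (hg : AEStronglyMeasurable g μ)
    (hρ : AEStronglyMeasurable ρ μ) (hρ0 : ∀ x, 0 ≤ ρ x)
    (hfρ : Integrable (fun x => ‖f x‖ ^ 2 * ρ x) μ)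
    (hgρ : Integrable (fun x => ‖g x‖ ^ 2 * ρ x) μ) :
    Integrable (fun x => f x * g x * (ρ x : ℂ)) μ := by
  refine ((hfρ.add hgρ).div_const 2).mono' (by fun_prop) (ae_of_all _ fun x => ?_)
  have hamgm := two_mul_le_add_sq ‖f x‖ ‖g x‖
  simp only [Pi.add_apply, norm_mul, Complex.norm_real, norm_of_nonneg (hρ0 x)]
  nlinarith [hρ0 x, hamgm]

theorem integrable_sq_norm_cexp_mul_conj_mul_gaussian (w : ℂ) :
    Integrable (fun z : ℂ => ‖cexp (w * conj z)‖ ^ 2 * rexp (-‖z‖ ^ 2)) := by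
  refine (GaussianFourier.integrable_cexp_neg_mul_sq_norm_add (b := 1) (by simp) 2 w).norm.congr
    (ae_of_all _ fun z => ?_)
  have hreal : -1 * (‖z‖ : ℂ) ^ 2 + 2 * (inner ℝ w z : ℝ)
      = ((2 * (w * conj z).re + -‖z‖ ^ 2 : ℝ) : ℂ) := by
    rw [real_inner_comm, Complex.inner]
    push_cast
    ring
  beta_reduce
  rw [hreal, Complex.norm_exp_ofReal, Complex.norm_exp, ← exp_nat_mul, ← exp_add]
  norm_num

theorem ofReal_exp_neg_sq_norm_eq_cexp (z : ℂ) :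
    (rexp (-‖z‖ ^ 2) : ℂ) = cexp (-(z * conj z)) := by
  rw [Complex.ofReal_exp, Complex.mul_conj, Complex.normSq_eq_norm_sq]
  push_cast; rfl

theorem cexp_mul_conj_add_mul_gaussian (w z : ℂ) :
    cexp (w * conj (z + w)) * (rexp (-‖z + w‖ ^ 2) : ℂ)
      = cexp (-(z * conj w)) * (rexp (-‖z‖ ^ 2) : ℂ) := by
  simp only [ofReal_exp_neg_sq_norm_eq_cexp, ← Complex.exp_add, map_add]
  ring_nf

/-- If `ψ : ℂ → ℂ` is entire with finite Segal–Bargmann norm, then the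
reproducing kernel `K(z,w) = e^{z·conj w}` satisfies the reproducing property:
for every `w ∈ ℂ`, `ψ(w) = (1/π) ∫_ℂ e^{w·conj z} ψ(z) e^{-|z|²} dA(z)`. -/
theorem segal_bargmann_reproducing (ψ : ℂ → ℂ)
    (hψ : Differentiable ℂ ψ)
    (hint : Integrable (fun z : ℂ => ‖ψ z‖ ^ 2 * Real.exp (-(‖z‖) ^ 2))) :
    ∀ w : ℂ,
      ψ w = (1 / (π : ℂ)) * ∫ z : ℂ,
        Complex.exp (w * (starRingEnd ℂ z)) * ψ z *
          (Real.exp (-(‖z‖) ^ 2) : ℂ) := by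
  intro w
  set G : ℂ → ℂ := fun z => cexp (-(z * conj w)) * ψ (z + w)
  have hG : Differentiable ℂ G := by fun_prop
  have hshift : ∀ z, cexp (w * conj (z + w)) * ψ (z + w) * (rexp (-‖z + w‖ ^ 2) : ℂ)
      = rexp (-‖z‖ ^ 2) • G z := by
    intro z
    rw [Complex.real_smul, mul_right_comm, cexp_mul_conj_add_mul_gaussian]
    ring
  have hF : Integrable (fun z => cexp (w * conj z) * ψ z * (rexp (-‖z‖ ^ 2) : ℂ)) :=
    integrable_mul_mul_of_sq_norm_mul (by fun_prop) hψ.continuous.aestronglyMeasurable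
      (by fun_prop) (fun _ => (exp_pos _).le) (integrable_sq_norm_cexp_mul_conj_mul_gaussian w) hint
  have hmean := hG.integral_gaussian_smul ((hF.comp_add_right w).congr (ae_of_all _ hshift))
  rw [← integral_add_right_eq_self _ w, integral_congr_ae (ae_of_all _ hshift), hmean]
  simp [G]
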